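/- Suppose Ψ satisfies Assumption 1. Then the objective values along the central path converge to the optimal value: for every ε > 0 there exists δ > 0 such that for all μ and v with 0 < μ < δ and ‖v‖ < δ, the point w = w(μ,v) satisfies |Ψ((K^T M(w)^{-1} K)^{-1}) − f*| < ε, where f* is the optimal value of the design problem. -/

import Mathlib

open Matrix Filter Topology

noncomputable section

attribute [local instance] Matrix.normedAddCommGroup Matrix.normedSpace

/-- Assumption 1: `Ψ` is convex, decreasing, twice continuously differentiable and bounded
below on the set of `k × k` real symmetric positive definite matrices, and `Ψ (X j) → ∞`
whenever `(X j)` is a bounded sequence of positive definite matrices whose smallest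
eigenvalues tend to `0`.  (Over `ℝ`, `Matrix.PosDef` includes symmetry.) -/
structure Assumption1 (k : ℕ) (Ψ : Matrix (Fin k) (Fin k) ℝ → ℝ) : Prop where
  convex : ∀ A B : Matrix (Fin k) (Fin k) ℝ, A.PosDef → B.PosDef →
    ∀ t : ℝ, 0 ≤ t → t ≤ 1 → Ψ (t • A + (1 - t) • B) ≤ t * Ψ A + (1 - t) * Ψ B
  decreasing : ∀ A B : Matrix (Fin k) (Fin k) ℝ, A.IsHermitian → B.PosDef →
    (A - B).PosSemidef → Ψ A ≤ Ψ B
  smooth : ContDiffOn ℝ 2 Ψ {U : Matrix (Fin k) (Fin k) ℝ | U.PosDef}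
  bddBelow : ∃ c : ℝ, ∀ U : Matrix (Fin k) (Fin k) ℝ, U.PosDef → c ≤ Ψ U
  blowup : ∀ (X : ℕ → Matrix (Fin k) (Fin k) ℝ) (hp : ∀ j, (X j).PosDef),
    (∃ C : ℝ, ∀ j i l, |X j i l| ≤ C) →
    Tendsto (fun j => ⨅ i, (hp j).isHermitian.eigenvalues i) atTop (𝓝 0) →
    Tendsto (fun j => Ψ (X j)) atTop atTop

/-- The simplex of designs. -/
def Omega (n : ℕ) : Set (Fin n → ℝ) := {w | (∀ i, 0 ≤ w i) ∧ ∑ i, w i = 1}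

/-- The moment matrix `M(w) = ∑ i, w i • A i`. -/
def Mmat {n m : ℕ} (A : Fin n → Matrix (Fin m) (Fin m) ℝ) (w : Fin n → ℝ) :
    Matrix (Fin m) (Fin m) ℝ := ∑ i, w i • A i

/-- `Range K ⊆ Range X`. -/
def RangeIncl {m k : ℕ} (K : Matrix (Fin m) (Fin k) ℝ) (X : Matrix (Fin m) (Fin m) ℝ) : Prop :=
  LinearMap.range (Matrix.toLin' K) ≤ LinearMap.range (Matrix.toLin' X)

/-- `Φ̂(X) = inf {Ψ U | U symmetric positive definite, X - K U Kᵀ positive semidefinite}`. -/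
def PhiHat {m k : ℕ} (K : Matrix (Fin m) (Fin k) ℝ) (Ψ : Matrix (Fin k) (Fin k) ℝ → ℝ)
    (X : Matrix (Fin m) (Fin m) ℝ) : ℝ :=
  sInf {y | ∃ U : Matrix (Fin k) (Fin k) ℝ, U.PosDef ∧ (X - K * U * Kᵀ).PosSemidef ∧ y = Ψ U}

/-- The optimal value `f*` of the design problem. -/
def fstar {n m k : ℕ} (A : Fin n → Matrix (Fin m) (Fin m) ℝ) (K : Matrix (Fin m) (Fin k) ℝ)
    (Ψ : Matrix (Fin k) (Fin k) ℝ → ℝ) : ℝ :=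
  sInf {y | ∃ w ∈ Omega n, RangeIncl K (Mmat A w) ∧ y = PhiHat K Ψ (Mmat A w)}

/-- `w` is an optimal solution of the design problem. -/
def IsOptimal {n m k : ℕ} (A : Fin n → Matrix (Fin m) (Fin m) ℝ) (K : Matrix (Fin m) (Fin k) ℝ)
    (Ψ : Matrix (Fin k) (Fin k) ℝ → ℝ) (w : Fin n → ℝ) : Prop :=
  w ∈ Omega n ∧ RangeIncl K (Mmat A w) ∧ PhiHat K Ψ (Mmat A w) = fstar A K Ψ

/-- The open domain `D` of the barrier subproblem. -/
def Dset (n : ℕ) : Set (Fin (n - 1) → ℝ) := {wt | (∀ i, 0 < wt i) ∧ ∑ i, wt i < 1}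

/-- `w(w̃) = (w̃₁, …, w̃_{n-1}, 1 - ∑ w̃ᵢ)`. -/
def extendW (n : ℕ) (wt : Fin (n - 1) → ℝ) : Fin n → ℝ :=
  fun i => if h : (i : ℕ) < n - 1 then wt ⟨i, h⟩ else 1 - ∑ j, wt j

/-- The log-barrier function `f_μ`. -/
def fmu {n m k : ℕ} (A : Fin n → Matrix (Fin m) (Fin m) ℝ) (K : Matrix (Fin m) (Fin k) ℝ)
    (Ψ : Matrix (Fin k) (Fin k) ℝ → ℝ) (μ : ℝ) (wt : Fin (n - 1) → ℝ) : ℝ :=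
  Ψ ((Kᵀ * (Mmat A (extendW n wt))⁻¹ * K)⁻¹)
    - μ * ∑ i, Real.log (wt i) - μ * Real.log (1 - ∑ i, wt i)

/-! At an interior design `M(w)` is positive definite, and by a Schur complement argument and the
antitonicity of matrix inversion the infimum defining `Φ̂(M(w))` is attained at
`U = (Kᵀ M(w)⁻¹ K)⁻¹`; hence every point of the central path has value at least `f*`.
Conversely, a nearly optimal feasible pair `(w, U)`, mixed with a small multiple of the uniform
design, yields (by convexity of `Ψ` and of the constraint `M(w) ⪰ K U Kᵀ`) an interior design `w'`
of value below `f* + ε/2`. Minimality of the central point against `w'` costs at most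
`μ · barrier(w') + 2‖v‖`, because the log-barrier is nonnegative on `D` and `|vᵀw̃| ≤ ‖v‖` there. -/

namespace Matrix

section Field

variable {R : Type*} [Field R] {m n : Type*} [Fintype n]

theorem mulVec_injective_of_rank_eq_card {K : Matrix m n R} (hK : K.rank = Fintype.card n) :
    Function.Injective K.mulVec := by
  have h := LinearMap.finrank_range_add_finrank_ker K.mulVecLin
  rw [← Matrix.rank, hK, Module.finrank_fintype_fun_eq_card, add_eq_left,
    Submodule.finrank_eq_zero] at h
  exact LinearMap.ker_eq_bot.mp h

theorem exists_mul_eq_of_range_le [Fintype m] [DecidableEq m] [DecidableEq n] {l : Type*}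
    {B : Matrix l m R} {A : Matrix l n R}
    (h : LinearMap.range A.toLin' ≤ LinearMap.range B.toLin') :
    ∃ C : Matrix m n R, B * C = A := by
  have hcol : ∀ j, ∃ c, B *ᵥ c = A.col j := fun j =>
    h ⟨Pi.single j 1, by rw [toLin'_apply, mulVec_single_one]⟩
  choose c hc using hcol
  refine ⟨(Matrix.of c)ᵀ, ?_⟩
  ext i j
  simpa [Matrix.mul_apply, mulVec, dotProduct] using congrFun (hc j) i

end Field

theorem PosSemidef.smul_add_smul_sub_mul_mul_transpose {m n : Type*} [Fintype n]
    {X Y : Matrix m m ℝ} {U V : Matrix n n ℝ} {K : Matrix m n ℝ}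
    (hXU : (X - K * U * Kᵀ).PosSemidef) (hYV : (Y - K * V * Kᵀ).PosSemidef) {s t : ℝ}
    (hs : 0 ≤ s) (ht : 0 ≤ t) : (s • X + t • Y - K * (s • U + t • V) * Kᵀ).PosSemidef := by
  have h : s • X + t • Y - K * (s • U + t • V) * Kᵀ
      = s • (X - K * U * Kᵀ) + t • (Y - K * V * Kᵀ) := by
    simp only [Matrix.mul_add, Matrix.add_mul, Matrix.mul_smul, Matrix.smul_mul, smul_sub]
    abel
  rw [h]
  exact (hXU.smul hs).add (hYV.smul ht)

variable {m n : Type*} [Fintype m] [Fintype n] [DecidableEq m]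

theorem PosDef.sub_mul_mul_transpose_posSemidef_iff [DecidableEq n] {X : Matrix m m ℝ}
    (hX : X.PosDef) {U : Matrix n n ℝ} (hU : U.PosDef) (K : Matrix m n ℝ) :
    (X - K * U * Kᵀ).PosSemidef ↔ (U⁻¹ - Kᵀ * X⁻¹ * K).PosSemidef := by
  have := hX.isUnit.invertible
  have := hU.isUnit.invertible
  have := hU.inv.isUnit.invertible
  simp only [← conjTranspose_eq_transpose_of_trivial]
  rw [← hX.fromBlocks₁₁, hU.inv.fromBlocks₂₂, inv_inv_of_invertible]

theorem PosDef.inv_sub_inv_posSemidef [DecidableEq n] {A B : Matrix n n ℝ} (hA : A.PosDef)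
    (hAB : (B - A).PosSemidef) : (A⁻¹ - B⁻¹).PosSemidef := by
  have hB : B.PosDef := by simpa using hA.add_posSemidef hAB
  simpa using (hB.sub_mul_mul_transpose_posSemidef_iff hA 1).mp (by simpa using hAB)

theorem PosDef.transpose_mul_inv_mul_posDef {X : Matrix m m ℝ} (hX : X.PosDef)
    {K : Matrix m n ℝ} (hK : Function.Injective K.mulVec) : (Kᵀ * X⁻¹ * K).PosDef := by
  simpa using hX.inv.conjTranspose_mul_mul_same hK

theorem PosDef.sub_mul_inv_mul_transpose_posSemidef [DecidableEq n] {X : Matrix m m ℝ}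
    (hX : X.PosDef) {K : Matrix m n ℝ} (hK : Function.Injective K.mulVec) :
    (X - K * (Kᵀ * X⁻¹ * K)⁻¹ * Kᵀ).PosSemidef := by
  have hW := hX.transpose_mul_inv_mul_posDef hK
  have := hW.isUnit.invertible
  rw [hX.sub_mul_mul_transpose_posSemidef_iff hW.inv, inv_inv_of_invertible, sub_self]
  exact PosSemidef.zero

theorem one_sub_mul_inv_mul_transpose_posSemidef [DecidableEq n] {C : Matrix m n ℝ}
    (hC : Function.Injective C.mulVec) : (1 - C * (Cᵀ * C)⁻¹ * Cᵀ).PosSemidef := by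
  simpa using PosDef.one.sub_mul_inv_mul_transpose_posSemidef hC

/-- With `X = Sᵀ S` and `K = X C`, the choice `U = (Dᵀ D)⁻¹` for `D = S C` gives
`X - K U Kᵀ = Sᵀ (1 - P) S`, where `P` is the orthogonal projection onto the range of `D`. -/
theorem exists_posDef_sub_mul_mul_transpose_posSemidef [DecidableEq n] {X : Matrix m m ℝ}
    (hX : X.PosSemidef) {K : Matrix m n ℝ} (hK : Function.Injective K.mulVec)
    (hR : LinearMap.range K.toLin' ≤ LinearMap.range X.toLin') :
    ∃ U : Matrix n n ℝ, U.PosDef ∧ (X - K * U * Kᵀ).PosSemidef := by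
  obtain ⟨C, rfl⟩ := exists_mul_eq_of_range_le hR
  obtain ⟨S, rfl⟩ : ∃ S : Matrix m m ℝ, X = Sᵀ * S := by
    open scoped MatrixOrder in
    refine ⟨CFC.sqrt X, ?_⟩
    rw [← conjTranspose_eq_transpose_of_trivial,
      (nonneg_iff_posSemidef.mp (CFC.sqrt_nonneg X)).isHermitian.eq,
      CFC.sqrt_mul_sqrt_self X hX.nonneg]
  have hD : Function.Injective (S * C).mulVec := fun x y hxy => hK <| by
    simpa only [← mulVec_mulVec, Matrix.mul_assoc] using congrArg (Sᵀ *ᵥ ·) hxy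
  refine ⟨((S * C)ᵀ * (S * C))⁻¹, ?_, ?_⟩
  · simpa using (PosDef.one.conjTranspose_mul_mul_same hD).inv
  · convert (one_sub_mul_inv_mul_transpose_posSemidef hD).conjTranspose_mul_mul_same S using 1
    simp only [conjTranspose_eq_transpose_of_trivial, transpose_mul, transpose_transpose,
      Matrix.mul_sub, Matrix.sub_mul, Matrix.mul_one, Matrix.mul_assoc]

end Matrix

section Design

variable {n m k : ℕ} {A : Fin n → Matrix (Fin m) (Fin m) ℝ}

theorem Mmat_add (w w' : Fin n → ℝ) : Mmat A (w + w') = Mmat A w + Mmat A w' := by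
  simp only [Mmat, Pi.add_apply, add_smul, Finset.sum_add_distrib]

theorem Mmat_smul (c : ℝ) (w : Fin n → ℝ) : Mmat A (c • w) = c • Mmat A w := by
  simp only [Mmat, Pi.smul_apply, smul_eq_mul, Finset.smul_sum, smul_smul]

theorem Mmat_posSemidef (hA : ∀ i, (A i).PosSemidef) {w : Fin n → ℝ} (hw : ∀ i, 0 ≤ w i) :
    (Mmat A w).PosSemidef :=
  posSemidef_sum _ fun i _ => (hA i).smul (hw i)

theorem Mmat_posDef_of_pos (hA : ∀ i, (A i).PosSemidef) {w₀ w : Fin n → ℝ}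
    (hw₀ : (Mmat A w₀).PosDef) (hw : ∀ i, 0 < w i) : (Mmat A w).PosDef := by
  obtain ⟨c, hcw, hc⟩ : ∃ c : ℝ, (∀ i, c * w₀ i < w i) ∧ 0 < c := by
    refine ((eventually_all.2 fun i => ?_).and self_mem_nhdsWithin).exists (f := 𝓝[>] 0)
    exact nhdsWithin_le_nhds <| (continuous_mul_const (w₀ i)).tendsto' 0 0 (zero_mul _)
      |>.eventually (gt_mem_nhds (hw i))
  have hsplit : Mmat A w = c • Mmat A w₀ + Mmat A (w - c • w₀) := by
    rw [← Mmat_smul, ← Mmat_add, add_sub_cancel]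
  rw [hsplit]
  exact (hw₀.smul hc).add_posSemidef
    (Mmat_posSemidef hA fun i => sub_nonneg.2 (hcw i).le)

theorem rangeIncl_of_posDef (K : Matrix (Fin m) (Fin k) ℝ) {X : Matrix (Fin m) (Fin m) ℝ}
    (hX : X.PosDef) : RangeIncl K X := by
  rw [RangeIncl, LinearMap.range_eq_top (f := X.toLin').mpr
    (mulVec_surjective_iff_isUnit.mpr hX.isUnit)]
  exact le_top

end Design

section OptimalValue

variable {n m k : ℕ} {A : Fin n → Matrix (Fin m) (Fin m) ℝ} {K : Matrix (Fin m) (Fin k) ℝ}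
  {Ψ : Matrix (Fin k) (Fin k) ℝ → ℝ}

theorem Assumption1.apply_inv_le (hΨ : Assumption1 k Ψ) (hK : Function.Injective K.mulVec)
    {X : Matrix (Fin m) (Fin m) ℝ} (hX : X.PosDef) {U : Matrix (Fin k) (Fin k) ℝ}
    (hU : U.PosDef) (hXU : (X - K * U * Kᵀ).PosSemidef) :
    Ψ ((Kᵀ * X⁻¹ * K)⁻¹) ≤ Ψ U := by
  have hW := hX.transpose_mul_inv_mul_posDef hK
  have := hU.isUnit.invertible
  have h := hW.inv_sub_inv_posSemidef ((hX.sub_mul_mul_transpose_posSemidef_iff hU K).mp hXU)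
  rw [inv_inv_of_invertible] at h
  exact hΨ.decreasing _ _ hW.inv.isHermitian hU h

theorem Assumption1.phiHat_eq (hΨ : Assumption1 k Ψ) (hK : Function.Injective K.mulVec)
    {X : Matrix (Fin m) (Fin m) ℝ} (hX : X.PosDef) :
    PhiHat K Ψ X = Ψ ((Kᵀ * X⁻¹ * K)⁻¹) := by
  refine IsLeast.csInf_eq ⟨⟨_, (hX.transpose_mul_inv_mul_posDef hK).inv,
    hX.sub_mul_inv_mul_transpose_posSemidef hK, rfl⟩, ?_⟩
  rintro _ ⟨U, hU, hXU, rfl⟩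
  exact hΨ.apply_inv_le hK hX hU hXU

theorem Assumption1.exists_le_phiHat (hΨ : Assumption1 k Ψ) :
    ∃ c, ∀ X : Matrix (Fin m) (Fin m) ℝ, c ≤ PhiHat K Ψ X := by
  obtain ⟨c, hc⟩ := hΨ.bddBelow
  refine ⟨min c 0, fun X => Real.le_sInf ?_ (min_le_right _ _)⟩
  rintro _ ⟨U, hU, -, rfl⟩
  exact min_le_of_left_le (hc U hU)

theorem Assumption1.fstar_le (hΨ : Assumption1 k Ψ) (hK : Function.Injective K.mulVec)
    {w : Fin n → ℝ} (hw : w ∈ Omega n) (hM : (Mmat A w).PosDef) :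
    fstar A K Ψ ≤ Ψ ((Kᵀ * (Mmat A w)⁻¹ * K)⁻¹) := by
  obtain ⟨c, hc⟩ := hΨ.exists_le_phiHat (K := K)
  rw [← hΨ.phiHat_eq hK hM]
  refine csInf_le ⟨c, ?_⟩ ⟨w, hw, rangeIncl_of_posDef K hM, rfl⟩
  rintro _ ⟨w, -, -, rfl⟩
  exact hc _

theorem exists_feasible_lt_fstar_add (hA : ∀ i, (A i).PosSemidef)
    (hex : ∃ w ∈ Omega n, (Mmat A w).PosDef) (hK : Function.Injective K.mulVec) {ε : ℝ}
    (hε : 0 < ε) : ∃ w ∈ Omega n, ∃ U : Matrix (Fin k) (Fin k) ℝ,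
      U.PosDef ∧ (Mmat A w - K * U * Kᵀ).PosSemidef ∧ Ψ U < fstar A K Ψ + ε := by
  obtain ⟨w₀, hw₀, hM₀⟩ := hex
  obtain ⟨_, ⟨w, hw, hR, rfl⟩, hwε⟩ := exists_lt_of_csInf_lt
    (by exact ⟨_, w₀, hw₀, rangeIncl_of_posDef K hM₀, rfl⟩)
    (lt_add_of_pos_right (fstar A K Ψ) (half_pos hε))
  obtain ⟨U, hU, hXU⟩ := exists_posDef_sub_mul_mul_transpose_posSemidef
    (Mmat_posSemidef hA hw.1) hK hR
  obtain ⟨_, ⟨U, hU, hXU, rfl⟩, hUε⟩ := exists_lt_of_csInf_lt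
    (by exact ⟨_, U, hU, hXU, rfl⟩) (lt_add_of_pos_right (PhiHat K Ψ (Mmat A w)) (half_pos hε))
  exact ⟨w, hw, U, hU, hXU, by linarith⟩

theorem Assumption1.exists_pos_lt_fstar_add (hΨ : Assumption1 k Ψ)
    (hA : ∀ i, (A i).PosSemidef) (hex : ∃ w ∈ Omega n, (Mmat A w).PosDef)
    (hK : Function.Injective K.mulVec) {ε : ℝ} (hε : 0 < ε) :
    ∃ w : Fin n → ℝ, (∀ i, 0 < w i) ∧ ∑ i, w i = 1 ∧
      Ψ ((Kᵀ * (Mmat A w)⁻¹ * K)⁻¹) < fstar A K Ψ + ε := by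
  obtain ⟨w, hw, U, hU, hXU, hUε⟩ := exists_feasible_lt_fstar_add (Ψ := Ψ) hA hex hK hε
  obtain ⟨w₀, -, hM₀⟩ := hex
  have hn : (n : ℝ) ≠ 0 := Nat.cast_ne_zero.2 <| by rintro rfl; simp [Omega] at hw
  set u : Fin n → ℝ := fun _ => (n : ℝ)⁻¹
  have hu : ∀ i, 0 < u i := fun _ => by positivity
  have hMu := Mmat_posDef_of_pos hA hM₀ hu
  set U₁ := (Kᵀ * (Mmat A u)⁻¹ * K)⁻¹
  have hU₁ : U₁.PosDef := (hMu.transpose_mul_inv_mul_posDef hK).inv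
  obtain ⟨t, ⟨ht1, ht_lt⟩, ht0⟩ :
      ∃ t : ℝ, (t < 1 ∧ t * Ψ U₁ + (1 - t) * Ψ U < fstar A K Ψ + ε) ∧ 0 < t := by
    have hcont : Continuous fun t : ℝ => t * Ψ U₁ + (1 - t) * Ψ U := by fun_prop
    have hlim : Tendsto (fun t : ℝ => t * Ψ U₁ + (1 - t) * Ψ U) (𝓝[>] 0) (𝓝 (Ψ U)) :=
      tendsto_nhdsWithin_of_tendsto_nhds <| hcont.tendsto' _ _ (by simp)
    exact (((eventually_lt_nhds one_pos).filter_mono nhdsWithin_le_nhds).and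
      (hlim.eventually (gt_mem_nhds hUε))).and self_mem_nhdsWithin |>.exists
  have hpos : ∀ i, 0 < (t • u + (1 - t) • w) i := fun i =>
    add_pos_of_pos_of_nonneg (mul_pos ht0 (hu i)) (mul_nonneg (sub_nonneg.2 ht1.le) (hw.1 i))
  refine ⟨t • u + (1 - t) • w, hpos, ?_, ?_⟩
  · simp only [Pi.add_apply, Pi.smul_apply, smul_eq_mul, Finset.sum_add_distrib,
      ← Finset.mul_sum, hw.2, u, Finset.sum_const, Finset.card_univ, Fintype.card_fin,
      nsmul_eq_mul]
    field_simp
    ring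
  calc Ψ ((Kᵀ * (Mmat A (t • u + (1 - t) • w))⁻¹ * K)⁻¹)
      ≤ Ψ (t • U₁ + (1 - t) • U) := by
        refine hΨ.apply_inv_le hK (Mmat_posDef_of_pos hA hM₀ hpos)
          ((hU₁.smul ht0).add_posSemidef (hU.posSemidef.smul (sub_nonneg.2 ht1.le))) ?_
        rw [Mmat_add, Mmat_smul, Mmat_smul]
        exact (hMu.sub_mul_inv_mul_transpose_posSemidef hK).smul_add_smul_sub_mul_mul_transpose
          hXU ht0.le (sub_nonneg.2 ht1.le)
    _ ≤ t * Ψ U₁ + (1 - t) * Ψ U := hΨ.convex _ _ hU₁ hU t ht0.le ht1.le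
    _ < fstar A K Ψ + ε := ht_lt

end OptimalValue

section Extend

variable {n : ℕ}

@[simp]
theorem extendW_castSucc (wt : Fin n → ℝ) (i : Fin n) :
    extendW (n + 1) wt i.castSucc = wt i := by
  simp [extendW]

@[simp]
theorem extendW_last (wt : Fin n → ℝ) : extendW (n + 1) wt (Fin.last n) = 1 - ∑ i, wt i := by
  simp [extendW]

theorem extendW_pos {wt : Fin n → ℝ} (h : wt ∈ Dset (n + 1)) :
    ∀ i, 0 < extendW (n + 1) wt i :=
  Fin.lastCases (by simpa using h.2) fun i => by simpa using h.1 i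

theorem extendW_mem_Omega {wt : Fin n → ℝ} (h : wt ∈ Dset (n + 1)) :
    extendW (n + 1) wt ∈ Omega (n + 1) :=
  ⟨fun i => (extendW_pos h i).le, by simp [Fin.sum_univ_castSucc]⟩

theorem init_mem_Dset {w : Fin (n + 1) → ℝ} (hw : ∀ i, 0 < w i) (hsum : ∑ i, w i = 1) :
    Fin.init w ∈ Dset (n + 1) := by
  rw [Fin.sum_univ_castSucc] at hsum
  exact ⟨fun i => hw _, by simp [Fin.init]; linarith [hw (Fin.last n)]⟩

theorem extendW_init {w : Fin (n + 1) → ℝ} (hsum : ∑ i, w i = 1) :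
    extendW (n + 1) (Fin.init w) = w := by
  rw [Fin.sum_univ_castSucc] at hsum
  ext i
  induction i using Fin.lastCases
  · simp [Fin.init]; linarith
  · simp [Fin.init]

end Extend

section Barrier

theorem abs_sum_mul_le_norm {ι : Type*} [Fintype ι] (v : ι → ℝ) {x : ι → ℝ}
    (hx : ∀ i, 0 ≤ x i) (hx1 : ∑ i, x i ≤ 1) : |∑ i, v i * x i| ≤ ‖v‖ :=
  calc |∑ i, v i * x i| ≤ ∑ i, |v i * x i| := Finset.abs_sum_le_sum_abs _ _
    _ ≤ ∑ i, ‖v‖ * x i := Finset.sum_le_sum fun i _ => by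
        rw [abs_mul, abs_of_nonneg (hx i)]
        exact mul_le_mul_of_nonneg_right (norm_le_pi_norm v i) (hx i)
    _ = ‖v‖ * ∑ i, x i := Finset.mul_sum _ _ _ |>.symm
    _ ≤ ‖v‖ := mul_le_of_le_one_right (norm_nonneg v) hx1

def logBarrier {ι : Type*} [Fintype ι] (x : ι → ℝ) : ℝ :=
  -∑ i, Real.log (x i) - Real.log (1 - ∑ i, x i)

theorem logBarrier_nonneg {ι : Type*} [Fintype ι] {x : ι → ℝ} (hx : ∀ i, 0 < x i)
    (hx1 : ∑ i, x i < 1) : 0 ≤ logBarrier x := by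
  have hle : ∀ i, x i ≤ 1 := fun i =>
    (Finset.single_le_sum (fun j _ => (hx j).le) (Finset.mem_univ i)).trans hx1.le
  have hsum : 0 ≤ ∑ i, x i := Finset.sum_nonneg fun i _ => (hx i).le
  have hlog : ∑ i, Real.log (x i) ≤ 0 :=
    Finset.sum_nonpos fun i _ => Real.log_nonpos (hx i).le (hle i)
  have hlog1 := Real.log_nonpos (sub_nonneg.2 hx1.le) (by linarith)
  unfold logBarrier
  linarith

variable {n m k : ℕ} {A : Fin n → Matrix (Fin m) (Fin m) ℝ} {K : Matrix (Fin m) (Fin k) ℝ}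
  {Ψ : Matrix (Fin k) (Fin k) ℝ → ℝ}

theorem fmu_eq_add_logBarrier (μ : ℝ) (wt : Fin (n - 1) → ℝ) :
    fmu A K Ψ μ wt = Ψ ((Kᵀ * (Mmat A (extendW n wt))⁻¹ * K)⁻¹) + μ * logBarrier wt := by
  unfold fmu logBarrier
  ring

theorem apply_le_add_logBarrier_of_fmu_sub_le {μ : ℝ} (hμ : 0 ≤ μ) {v wc wt : Fin (n - 1) → ℝ}
    (hwc : wc ∈ Dset n) (hwt : wt ∈ Dset n)
    (hmin : fmu A K Ψ μ wc - ∑ i, v i * wc i ≤ fmu A K Ψ μ wt - ∑ i, v i * wt i) :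
    Ψ ((Kᵀ * (Mmat A (extendW n wc))⁻¹ * K)⁻¹) ≤
      Ψ ((Kᵀ * (Mmat A (extendW n wt))⁻¹ * K)⁻¹) + μ * logBarrier wt + 2 * ‖v‖ := by
  rw [fmu_eq_add_logBarrier, fmu_eq_add_logBarrier] at hmin
  have hbarrier := mul_nonneg hμ (logBarrier_nonneg hwc.1 hwc.2)
  have hvc := abs_le.mp (abs_sum_mul_le_norm v (fun i => (hwc.1 i).le) hwc.2.le)
  have hvt := abs_le.mp (abs_sum_mul_le_norm v (fun i => (hwt.1 i).le) hwt.2.le)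
  linarith [hvc.1, hvt.2]

end Barrier

theorem central_path_value_convergence_general (n m k : ℕ) (hn : 2 ≤ n)
    (A : Fin n → Matrix (Fin m) (Fin m) ℝ) (hA : ∀ i, (A i).PosSemidef)
    (hex : ∃ w ∈ Omega n, (Mmat A w).PosDef)
    (K : Matrix (Fin m) (Fin k) ℝ) (hK : K.rank = k)
    (Ψ : Matrix (Fin k) (Fin k) ℝ → ℝ)
    (hΨ : Assumption1 k Ψ)
    (wfun : ℝ → (Fin (n - 1) → ℝ) → Fin (n - 1) → ℝ)
    (hwfun : ∀ μ : ℝ, 0 < μ → ∀ v : Fin (n - 1) → ℝ, wfun μ v ∈ Dset n ∧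
      ∀ wt' ∈ Dset n, fmu A K Ψ μ (wfun μ v) - ∑ i, v i * wfun μ v i ≤
        fmu A K Ψ μ wt' - ∑ i, v i * wt' i) :
    ∀ ε : ℝ, 0 < ε → ∃ δ : ℝ, 0 < δ ∧
      ∀ (μ : ℝ) (v : Fin (n - 1) → ℝ), 0 < μ → μ < δ → ‖v‖ < δ →
        |Ψ ((Kᵀ * (Mmat A (extendW n (wfun μ v)))⁻¹ * K)⁻¹) - fstar A K Ψ| < ε := by
  intro ε hε
  obtain ⟨n, rfl⟩ : ∃ n', n = n' + 1 := ⟨n - 1, by omega⟩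
  have hKinj : Function.Injective K.mulVec :=
    mulVec_injective_of_rank_eq_card (by simpa using hK)
  obtain ⟨w, hw, hw1, hwε⟩ := hΨ.exists_pos_lt_fstar_add hA hex hKinj (half_pos hε)
  obtain ⟨w₀, -, hM₀⟩ := hex
  have hwD := init_mem_Dset hw hw1
  rw [← extendW_init hw1] at hwε
  set B := logBarrier (Fin.init w)
  have hB : 0 ≤ B := logBarrier_nonneg hwD.1 hwD.2
  refine ⟨ε / 2 / (B + 2), by positivity, fun μ v hμ hμδ hvδ => ?_⟩
  obtain ⟨hD, hmin⟩ := hwfun μ hμ v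
  have hlow := hΨ.fstar_le hKinj (extendW_mem_Omega hD)
    (Mmat_posDef_of_pos hA hM₀ (extendW_pos hD))
  have hup := apply_le_add_logBarrier_of_fmu_sub_le hμ.le hD hwD (hmin _ hwD)
  have hsmall : μ * B + 2 * ‖v‖ < ε / 2 :=
    calc μ * B + 2 * ‖v‖ < ε / 2 / (B + 2) * B + 2 * (ε / 2 / (B + 2)) :=
        add_lt_add_of_le_of_lt (mul_le_mul_of_nonneg_right hμδ.le hB) (by linarith)
      _ = ε / 2 := by field_simp
  rw [abs_lt]
  constructor <;> linarith

/-- The objective values along the central path converge to the optimal value `f*`. -/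
theorem central_path_value_convergence (n m k : ℕ) (hn : 2 ≤ n) (hm : 1 ≤ m) (hk : 1 ≤ k) (hkm : k ≤ m)
    (A : Fin n → Matrix (Fin m) (Fin m) ℝ) (hA : ∀ i, (A i).PosSemidef)
    (hex : ∃ w ∈ Omega n, (Mmat A w).PosDef)
    (K : Matrix (Fin m) (Fin k) ℝ) (hK : K.rank = k)
    (Ψ : Matrix (Fin k) (Fin k) ℝ → ℝ)
    (hΨ : Assumption1 k Ψ)
    (wfun : ℝ → (Fin (n - 1) → ℝ) → Fin (n - 1) → ℝ)
    (hwfun : ∀ μ : ℝ, 0 < μ → ∀ v : Fin (n - 1) → ℝ, wfun μ v ∈ Dset n ∧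
      ∀ wt' ∈ Dset n, fmu A K Ψ μ (wfun μ v) - ∑ i, v i * wfun μ v i ≤
        fmu A K Ψ μ wt' - ∑ i, v i * wt' i) :
    ∀ ε : ℝ, 0 < ε → ∃ δ : ℝ, 0 < δ ∧
      ∀ (μ : ℝ) (v : Fin (n - 1) → ℝ), 0 < μ → μ < δ → ‖v‖ < δ →
        |Ψ ((Kᵀ * (Mmat A (extendW n (wfun μ v)))⁻¹ * K)⁻¹) - fstar A K Ψ| < ε :=
  central_path_value_convergence_general n m k hn A hA hex K hK Ψ hΨ wfun hwfun
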